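/- arXiv:2512.24520 — 11 statements merged into one kernel-verified Lean document; each statement's English description precedes it below -/
import Mathlib

section
/- Suppose the utilitarian uniform carbon price τ_U and the Negishi-weighted carbon price τ_N satisfy, respectively, τ_U = -(u'_N D'_N + u'_S D'_S) · (C''_S + C''_N)/(u'_N C''_S + u'_S C''_N) (with marginal damages and marginal utilities evaluated at the utilitarian solution) and τ_N = -(D̃'_N + D̃'_S) (evaluated at the Negishi solution), where D_i are strictly decreasing strictly convex functions of aggregate abatement, C_i are strictly increasing strictly convex cost functions with constant positive second derivatives C''_i, u'_S > u'_N > 0, and abatement in each solution is determined by equating marginal abatement cost to the carbon price. Then τ_U > τ_N if and only if D'_S/D'_N > C''_N/C''_S, where D'_i denotes the marginal damage evaluated at the utilitarian solution. -/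
/-- Proposition 1: the utilitarian uniform carbon price exceeds the
Negishi-weighted carbon price iff `D'_S / D'_N > C''_N / C''_S`, with marginal
damages evaluated at the utilitarian solution. -/
theorem utilitarian_gt_negishi_iff
    (CN CS mN mS : ℝ) (hCN : 0 < CN) (hCS : 0 < CS)
    (D'N D'S : ℝ → ℝ)
    (hDNmono : StrictMono D'N) (hDSmono : StrictMono D'S)
    (hDNneg : ∀ A, D'N A < 0) (hDSneg : ∀ A, D'S A < 0)
    (uN uS : ℝ) (huN : 0 < uN) (huNS : uN < uS)
    -- aggregate abatement under a uniform carbon price τ (marginal cost C''_i A + m_i = τ)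
    (A : ℝ → ℝ) (hA : ∀ τ, A τ = (τ - mN) / CN + (τ - mS) / CS)
    (τNeg τU : ℝ)
    -- Negishi price: sum of marginal monetary benefits of abatement
    (hNeg : τNeg = -(D'N (A τNeg) + D'S (A τNeg)))
    -- utilitarian uniform price
    (hU : τU = -(uN * D'N (A τU) + uS * D'S (A τU)) * (CS + CN) /
        (uN * CS + uS * CN)) :
    τU > τNeg ↔ D'S (A τU) / D'N (A τU) > CN / CS := by
  have hAmono : StrictMono A := by
    intro x y hxy
    rw [hA, hA]
    gcongr <;> linarith
  set a := D'N (A τU) with ha_def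
  set b := D'S (A τU) with hb_def
  have ha : a < 0 := hDNneg _
  have hb : b < 0 := hDSneg _
  have huS : 0 < uS := huN.trans huNS
  have hd : 0 < uN * CS + uS * CN := by positivity
  have key : τU > τNeg ↔ τU + a + b > 0 := by
    constructor
    · intro h
      have h1 : D'N (A τNeg) < a := hDNmono (hAmono h)
      have h2 : D'S (A τNeg) < b := hDSmono (hAmono h)
      linarith
    · intro h
      by_contra hle
      push_neg at hle
      have hA' : A τU ≤ A τNeg := hAmono.monotone hle
      have h1 : a ≤ D'N (A τNeg) := hDNmono.monotone hA'
      have h2 : b ≤ D'S (A τNeg) := hDSmono.monotone hA'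
      linarith
  have hE : (τU + a + b) * (uN * CS + uS * CN) = (uS - uN) * (a * CN - b * CS) := by
    rw [hU]
    field_simp
    ring
  have hsum : τU + a + b > 0 ↔ a * CN > b * CS := by
    constructor
    · intro h
      nlinarith
    · intro h
      nlinarith
  have hfin : a * CN > b * CS ↔ b / a > CN / CS := by
    simp only [gt_iff_lt]
    rw [show b / a = -b / -a from (neg_div_neg_eq b a).symm,
      div_lt_div_iff₀ hCS (by linarith : (0:ℝ) < -a)]
    constructor <;> intro <;> nlinarith
  rw [key, hsum, hfin]
end

section
/- Under the assumptions of Proposition 1, the utilitarian uniform carbon price τ_U exceeds the Negishi-weighted carbon price τ_N if and only if, at the utilitarian uniform carbon price, the ratio of the marginal benefit of abatement to the marginal cost of abatement with respect to a marginal increase in the uniform carbon price is strictly greater than 1 for the South and strictly less than 1 for the North: (-dD_S/dτ)/(dC_S/dτ) > 1 > (-dD_N/dτ)/(dC_N/dτ). -/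
/-- Corollary 1: the utilitarian uniform carbon price exceeds the Negishi
price iff, at the utilitarian price, the ratio of the marginal benefit to the
marginal cost of abatement with respect to the uniform carbon price is greater
than one for the South and less than one for the North, using
`dC_i/dτ = τ/C''_i` and `dD_i/dτ = D'_i(A) (1/C''_N + 1/C''_S)`. -/
theorem utilitarian_gt_negishi_iff_benefit_cost_ratios
    (CN CS mN mS : ℝ) (hCN : 0 < CN) (hCS : 0 < CS)
    (D'N D'S : ℝ → ℝ)
    (hDNmono : StrictMono D'N) (hDSmono : StrictMono D'S)
    (hDNneg : ∀ A, D'N A < 0) (hDSneg : ∀ A, D'S A < 0)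
    (uN uS : ℝ) (huN : 0 < uN) (huNS : uN < uS)
    (A : ℝ → ℝ) (hA : ∀ τ, A τ = (τ - mN) / CN + (τ - mS) / CS)
    (τNeg τU : ℝ)
    (hNeg : τNeg = -(D'N (A τNeg) + D'S (A τNeg)))
    (hU : τU = -(uN * D'N (A τU) + uS * D'S (A τU)) * (CS + CN) /
        (uN * CS + uS * CN)) :
    τU > τNeg ↔
      ((-(D'S (A τU) * (1 / CN + 1 / CS))) / (τU / CS) > 1 ∧
        1 > (-(D'N (A τU) * (1 / CN + 1 / CS))) / (τU / CN)) := by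
  have hdN := hDNneg (A τU)
  have hdS := hDSneg (A τU)
  set dN := D'N (A τU) with hdNdef
  set dS := D'S (A τU) with hdSdef
  have huS : 0 < uS := lt_trans huN huNS
  have hden : 0 < uN * CS + uS * CN := by positivity
  have hτU : 0 < τU := by
    rw [hU]
    apply div_pos _ hden
    have h1 : 0 < -(uN * dN + uS * dS) := by
      nlinarith [mul_neg_of_pos_of_neg huN hdN, mul_neg_of_pos_of_neg huS hdS]
    exact mul_pos h1 (by linarith)
  have hkey : uN * (τU * CS + dN * (CS + CN)) + uS * (τU * CN + dS * (CS + CN)) = 0 := by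
    have h1 : τU * (uN * CS + uS * CN) = -(uN * dN + uS * dS) * (CS + CN) := by
      rw [hU]
      field_simp
    nlinarith [h1]
  have hAmono : StrictMono A := by
    intro a b hab
    rw [hA a, hA b]
    gcongr
  have hg : StrictMono (fun τ => τ + D'N (A τ) + D'S (A τ)) := by
    intro a b hab
    have h1 := hDNmono (hAmono hab)
    have h2 := hDSmono (hAmono hab)
    dsimp only
    linarith
  have hL : τNeg < τU ↔ 0 < τU + dN + dS := by
    have h0 : τNeg + D'N (A τNeg) + D'S (A τNeg) = 0 := by linarith
    rw [← hg.lt_iff_lt]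
    show τNeg + D'N (A τNeg) + D'S (A τNeg) < τU + dN + dS ↔ _
    constructor <;> intro h <;> linarith
  have hS : (-(dS * (1 / CN + 1 / CS))) / (τU / CS) > 1 ↔
      τU * CN + dS * (CS + CN) < 0 := by
    rw [gt_iff_lt, lt_div_iff₀ (by positivity)]
    rw [show -(dS * (1 / CN + 1 / CS)) = (-dS * (CS + CN)) / (CN * CS) by
      field_simp]
    rw [show (1:ℝ) * (τU / CS) = (τU * CN) / (CN * CS) by field_simp]
    rw [div_lt_div_iff₀ (by positivity) (by positivity)]
    constructor <;> intro h <;> nlinarith [mul_pos hCN hCS]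
  have hN : 1 > (-(dN * (1 / CN + 1 / CS))) / (τU / CN) ↔
      0 < τU * CS + dN * (CS + CN) := by
    rw [gt_iff_lt, div_lt_one (by positivity)]
    rw [show -(dN * (1 / CN + 1 / CS)) = (-dN * (CS + CN)) / (CN * CS) by
      field_simp]
    rw [show τU / CN = (τU * CS) / (CN * CS) by field_simp]
    rw [div_lt_div_iff₀ (by positivity) (by positivity)]
    constructor <;> intro h <;> nlinarith [mul_pos hCN hCS]
  rw [gt_iff_lt, hL, hS, hN]
  set X := τU * CS + dN * (CS + CN) with hX
  set Y := τU * CN + dS * (CS + CN) with hY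
  have hid : (uS - uN) * X = uS * (X + Y) := by linarith
  constructor
  · intro h
    have hXY : 0 < X + Y := by nlinarith
    have hXpos : 0 < X := by nlinarith [mul_pos huS hXY]
    refine ⟨?_, hXpos⟩
    nlinarith
  · rintro ⟨hYneg, hXpos⟩
    have : 0 < X + Y := by nlinarith
    nlinarith
end

section
/- In the static two-region model, the utilitarian differentiated carbon prices satisfy τ_S < τ_Negishi < τ_N, where τ_i = -(1/u'_i)(u'_N D̂'_N + u'_S D̂'_S) are the utilitarian differentiated prices and τ_Negishi = -(D̃'_N + D̃'_S) is the Negishi price. Consequently, the South abates less and the North abates more under the utilitarian differentiated solution than under the Negishi solution: Â_S < Ã_S and Â_N > Ã_N. -/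
/-- Lemma 1: the utilitarian differentiated carbon prices straddle the
Negishi price, `τ̂_S < τ̃ < τ̂_N`; hence the South abates less and the North
abates more under the utilitarian differentiated solution. -/
theorem utilitarian_differentiated_prices_straddle_negishi
    (CN CS mN mS : ℝ) (hCN : 0 < CN) (hCS : 0 < CS)
    (D'N D'S : ℝ → ℝ)
    (hDNmono : StrictMono D'N) (hDSmono : StrictMono D'S)
    (hDNneg : ∀ A, D'N A < 0) (hDSneg : ∀ A, D'S A < 0)
    (uN uS : ℝ) (huN : 0 < uN) (huNS : uN < uS)
    -- regional abatement responses to a carbon price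
    (AN AS : ℝ → ℝ)
    (hAN : ∀ τ, AN τ = (τ - mN) / CN) (hAS : ∀ τ, AS τ = (τ - mS) / CS)
    -- Negishi solution
    (τNeg : ℝ)
    (hNeg : τNeg = -(D'N (AN τNeg + AS τNeg) + D'S (AN τNeg + AS τNeg)))
    -- utilitarian differentiated solution
    (τhatN τhatS Ahat : ℝ)
    (hAhat : Ahat = AN τhatN + AS τhatS)
    (hhatN : uN * τhatN = -(uN * D'N Ahat + uS * D'S Ahat))
    (hhatS : uS * τhatS = -(uN * D'N Ahat + uS * D'S Ahat)) :
    τhatS < τNeg ∧ τNeg < τhatN ∧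
      AS τhatS < AS τNeg ∧ AN τNeg < AN τhatN := by
  have huS : 0 < uS := lt_trans huN huNS
  have hM : 0 < -(uN * D'N Ahat + uS * D'S Ahat) := by
    nlinarith [hDNneg Ahat, hDSneg Ahat]
  have hτNpos : 0 < τhatN := by nlinarith
  have hSN : τhatS < τhatN := by nlinarith
  -- key straddle around m := -(D'N Ahat + D'S Ahat)
  have hSm : τhatS < -(D'N Ahat + D'S Ahat) := by nlinarith [hDNneg Ahat]
  have hmN : -(D'N Ahat + D'S Ahat) < τhatN := by nlinarith [hDSneg Ahat]
  -- monotonicity of abatement in price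
  have hANmono : ∀ τ1 τ2, τ1 < τ2 → AN τ1 < AN τ2 := by
    intro τ1 τ2 h; rw [hAN, hAN]; gcongr
  have hASmono : ∀ τ1 τ2, τ1 < τ2 → AS τ1 < AS τ2 := by
    intro τ1 τ2 h; rw [hAS, hAS]; gcongr
  have hASmono' : ∀ τ1 τ2, τ1 ≤ τ2 → AS τ1 ≤ AS τ2 := by
    intro τ1 τ2 h; rw [hAS, hAS]; gcongr
  have hANmono' : ∀ τ1 τ2, τ1 ≤ τ2 → AN τ1 ≤ AN τ2 := by
    intro τ1 τ2 h; rw [hAN, hAN]; gcongr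
  have h1 : τhatS < τNeg := by
    by_contra h
    push_neg at h
    have hA : AN τNeg + AS τNeg < Ahat := by
      rw [hAhat]
      have := hANmono τNeg τhatN (lt_of_le_of_lt h hSN)
      have := hASmono' τNeg τhatS h
      linarith
    have hN := hDNmono hA
    have hS := hDSmono hA
    linarith
  have h2 : τNeg < τhatN := by
    by_contra h
    push_neg at h
    have hA : Ahat < AN τNeg + AS τNeg := by
      rw [hAhat]
      have := hANmono' τhatN τNeg h
      have := hASmono τhatS τNeg (lt_of_lt_of_le hSN h)
      linarith
    have hN := hDNmono hA
    have hS := hDSmono hA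
    linarith
  exact ⟨h1, h2, hASmono _ _ h1, hANmono _ _ h2⟩
end

section
/- In the static two-region model with quadratic abatement cost functions C_i(A) = k_i A^2 + m_i A + n_i (k_i > 0), the aggregate abatement under the utilitarian differentiated carbon price solution exceeds the aggregate abatement under the Negishi solution, i.e., Â > Ã, if and only if (u'_S/u'_N)(D̂'_S/D̂'_N) > C''_N/C''_S, where marginal utilities and marginal damages are evaluated at the utilitarian differentiated solution. -/
/-- Proposition 2: with quadratic abatement costs, aggregate abatement under
the utilitarian differentiated carbon price solution exceeds that under the
Negishi solution iff `(u'_S/u'_N)(D̂'_S/D̂'_N) > C''_N/C''_S`. -/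
theorem aggregate_abatement_utilitarian_diff_gt_negishi_iff
    (kN kS mN mS : ℝ) (hkN : 0 < kN) (hkS : 0 < kS)
    (D'N D'S : ℝ → ℝ)
    (hDNmono : StrictMono D'N) (hDSmono : StrictMono D'S)
    (hDNneg : ∀ A, D'N A < 0) (hDSneg : ∀ A, D'S A < 0)
    (uN uS : ℝ) (huN : 0 < uN) (huNS : uN < uS)
    -- regional abatement responses, C_i(A) = k_i A² + m_i A + n_i so C''_i = 2 k_i
    (AN AS : ℝ → ℝ)
    (hAN : ∀ τ, AN τ = (τ - mN) / (2 * kN)) (hAS : ∀ τ, AS τ = (τ - mS) / (2 * kS))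
    -- Negishi solution
    (τNeg : ℝ)
    (hNeg : τNeg = -(D'N (AN τNeg + AS τNeg) + D'S (AN τNeg + AS τNeg)))
    -- utilitarian differentiated solution
    (τhatN τhatS Ahat : ℝ)
    (hAhat : Ahat = AN τhatN + AS τhatS)
    (hhatN : uN * τhatN = -(uN * D'N Ahat + uS * D'S Ahat))
    (hhatS : uS * τhatS = -(uN * D'N Ahat + uS * D'S Ahat)) :
    Ahat > AN τNeg + AS τNeg ↔
      (uS / uN) * (D'S Ahat / D'N Ahat) > (2 * kN) / (2 * kS) := by
  have huS : 0 < uS := huN.trans huNS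
  have hdN : D'N Ahat < 0 := hDNneg Ahat
  have hdS : D'S Ahat < 0 := hDSneg Ahat
  set dN := D'N Ahat with hdNdef
  set dS := D'S Ahat with hdSdef
  have huN' : uN ≠ 0 := ne_of_gt huN
  have huS' : uS ≠ 0 := ne_of_gt huS
  have hτN : τhatN = -(uN * dN + uS * dS) / uN := by
    field_simp
    linarith [hhatN]
  have hτS : τhatS = -(uN * dN + uS * dS) / uS := by
    field_simp
    linarith [hhatS]
  set c : ℝ := 1 / (2 * kN) + 1 / (2 * kS) with hc
  have hcpos : 0 < c := by positivity
  have hmono : StrictMono (fun A => A + c * (D'N A + D'S A)) :=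
    strictMono_id.add ((hDNmono.add hDSmono).const_mul hcpos)
  set Atil := AN τNeg + AS τNeg with hAtil
  have key : Ahat > Atil ↔
      Atil + c * (D'N Atil + D'S Atil) < Ahat + c * (dN + dS) := hmono.lt_iff_lt.symm
  have hNegsum : D'N Atil + D'S Atil = -τNeg := by linarith [hNeg]
  have hAtilval : Atil = (τNeg - mN) / (2 * kN) + (τNeg - mS) / (2 * kS) := by
    rw [hAtil, hAN, hAS]
  have hAhatval : Ahat = (τhatN - mN) / (2 * kN) + (τhatS - mS) / (2 * kS) := by
    rw [hAhat, hAN, hAS]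
  set X : ℝ := uN * kN * dN - uS * kS * dS with hX
  have hdiff : Ahat + c * (dN + dS) - (Atil + c * (D'N Atil + D'S Atil)) =
      (uS - uN) / (2 * uN * uS * kN * kS) * X := by
    rw [hNegsum, hAtilval, hAhatval, hτN, hτS, hc, hX]
    field_simp
    ring
  have hqpos : 0 < (uS - uN) / (2 * uN * uS * kN * kS) :=
    div_pos (by linarith) (by positivity)
  have hleft : Ahat > Atil ↔ 0 < X := by
    rw [key, ← sub_pos, hdiff]
    constructor
    · intro h
      by_contra h'
      push_neg at h'
      nlinarith
    · intro h
      exact mul_pos hqpos h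
  have hright : ((2 * kN) / (2 * kS) < (uS / uN) * (dS / dN)) ↔ 0 < X := by
    have hrw : (uS / uN) * (dS / dN) = (-(uS * dS)) / (-(uN * dN)) := by
      rw [neg_div_neg_eq, div_mul_div_comm]
    rw [hrw, div_lt_div_iff₀ (by positivity) (by nlinarith : (0:ℝ) < -(uN * dN)), hX]
    constructor <;> intro h <;> (ring_nf at h ⊢; linarith)
  exact hleft.trans hright.symm
end

section
/- The utilitarian uniform carbon price and the Negishi-weighted uniform carbon price both lie strictly between the two regions' preferred uniform carbon prices, unless all four prices coincide. Concretely: if D'_S/D'_N > C''_N/C''_S at the relevant solutions then τ^S > τ_U > τ^N and τ^S > τ_Negishi > τ^N; if the reverse strict inequality holds then all orderings reverse; and τ^S = τ_U = τ_Negishi = τ^N if and only if D'_S/D'_N = C''_N/C''_S. -/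
/-- Lemma 2: the utilitarian uniform carbon price and the Negishi carbon price
both lie strictly between the regions' preferred uniform carbon prices, unless
all prices coincide, with the orderings determined by the sign of
`D'_S/D'_N - C''_N/C''_S` at the relevant solutions. -/
theorem uniform_prices_between_preferred_prices
    (CN CS mN mS : ℝ) (hCN : 0 < CN) (hCS : 0 < CS)
    (D'N D'S : ℝ → ℝ)
    (hDNmono : StrictMono D'N) (hDSmono : StrictMono D'S)
    (hDNneg : ∀ A, D'N A < 0) (hDSneg : ∀ A, D'S A < 0)
    (uN uS : ℝ) (huN : 0 < uN) (huNS : uN < uS)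
    (A : ℝ → ℝ) (hA : ∀ τ, A τ = (τ - mN) / CN + (τ - mS) / CS)
    (τNeg τU τPN τPS : ℝ)
    (hNeg : τNeg = -(D'N (A τNeg) + D'S (A τNeg)))
    (hU : τU = -(uN * D'N (A τU) + uS * D'S (A τU)) * (CS + CN) /
        (uN * CS + uS * CN))
    -- preferred uniform carbon prices of North and South
    (hPN : τPN = -D'N (A τPN) * (CN + CS) / CS)
    (hPS : τPS = -D'S (A τPS) * (CS + CN) / CN) :
    (D'S (A τU) / D'N (A τU) > CN / CS → τPN < τU ∧ τU < τPS) ∧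
    (D'S (A τNeg) / D'N (A τNeg) > CN / CS → τPN < τNeg ∧ τNeg < τPS) ∧
    (D'S (A τU) / D'N (A τU) < CN / CS → τPS < τU ∧ τU < τPN) ∧
    (D'S (A τNeg) / D'N (A τNeg) < CN / CS → τPS < τNeg ∧ τNeg < τPN) ∧
    ((τPS = τU ∧ τU = τNeg ∧ τNeg = τPN) ↔
      D'S (A τNeg) / D'N (A τNeg) = CN / CS) := by
  have huS : (0:ℝ) < uS := huN.trans huNS
  have hCNS : (0:ℝ) < CN + CS := by linarith
  have hden : (0:ℝ) < uN * CS + uS * CN := by positivity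
  have hAmono : StrictMono A := by
    intro x y hxy
    rw [hA, hA]
    exact add_lt_add ((div_lt_div_iff_of_pos_right hCN).mpr (by linarith))
      ((div_lt_div_iff_of_pos_right hCS).mpr (by linarith))
  -- fixed point comparison lemmas for strictly decreasing maps
  have cmp : ∀ f : ℝ → ℝ, StrictAnti f → ∀ a b, f a = a → f b < b → a < b := by
    intro f hf a b ha hb
    rcases lt_trichotomy a b with h|h|h
    · exact h
    · exfalso; rw [h] at ha; linarith
    · exfalso; have := hf h; linarith
  have cmp2 : ∀ f : ℝ → ℝ, StrictAnti f → ∀ a b, f a = a → b < f b → b < a := by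
    intro f hf a b ha hb
    rcases lt_trichotomy b a with h|h|h
    · exact h
    · exfalso; rw [h] at hb; linarith
    · exfalso; have := hf h; linarith
  have fixuniq : ∀ f : ℝ → ℝ, StrictAnti f → ∀ a b, f a = a → f b = b → a = b := by
    intro f hf a b ha hb
    rcases lt_trichotomy a b with h|h|h
    · exfalso; have := hf h; linarith
    · exact h
    · exfalso; have := hf h; linarith
  -- monotonicity of the four maps
  have hPNanti : StrictAnti (fun τ => -D'N (A τ) * (CN + CS) / CS) := by
    intro x y hxy
    have h1 := hDNmono (hAmono hxy)
    dsimp only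
    rw [div_lt_div_iff_of_pos_right hCS]
    nlinarith [h1, hCNS]
  have hPSanti : StrictAnti (fun τ => -D'S (A τ) * (CS + CN) / CN) := by
    intro x y hxy
    have h1 := hDSmono (hAmono hxy)
    dsimp only
    rw [div_lt_div_iff_of_pos_right hCN]
    nlinarith [h1, hCNS]
  have hUanti : StrictAnti (fun τ =>
      -(uN * D'N (A τ) + uS * D'S (A τ)) * (CS + CN) / (uN * CS + uS * CN)) := by
    intro x y hxy
    have h1 := hDNmono (hAmono hxy)
    have h2 := hDSmono (hAmono hxy)
    dsimp only
    rw [div_lt_div_iff_of_pos_right hden]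
    nlinarith [mul_pos hCNS (add_pos (mul_pos huN (sub_pos.mpr h1))
      (mul_pos huS (sub_pos.mpr h2)))]
  -- translating the ratio conditions
  have keypos : ∀ a : ℝ, CN / CS < D'S a / D'N a → CN * -D'N a < -D'S a * CS := by
    intro a hc
    have hn := hDNneg a
    rw [show D'S a / D'N a = -D'S a / -D'N a by rw [neg_div_neg_eq]] at hc
    rw [div_lt_div_iff₀ hCS (by linarith : (0:ℝ) < -D'N a)] at hc
    linarith
  have keyneg : ∀ a : ℝ, D'S a / D'N a < CN / CS → -D'S a * CS < CN * -D'N a := by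
    intro a hc
    have hn := hDNneg a
    rw [show D'S a / D'N a = -D'S a / -D'N a by rw [neg_div_neg_eq]] at hc
    rw [div_lt_div_iff₀ (by linarith : (0:ℝ) < -D'N a) hCS] at hc
    linarith
  refine ⟨?_, ?_, ?_, ?_, ?_, ?_⟩
  · -- utilitarian, S-damage side heavier
    intro hc
    have key := keypos _ hc
    constructor
    · have hlt : -D'N (A τU) * (CN + CS) / CS < τU := by
        have h2 : -D'N (A τU) * (CN + CS) / CS <
            -(uN * D'N (A τU) + uS * D'S (A τU)) * (CS + CN) / (uN * CS + uS * CN) := by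
          rw [div_lt_div_iff₀ hCS hden]
          nlinarith [mul_pos hCNS (mul_pos huS
            (by linarith : (0:ℝ) < -D'S (A τU) * CS - CN * -D'N (A τU)))]
        linarith [hU]
      exact cmp _ hPNanti τPN τU hPN.symm hlt
    · have hlt : τU < -D'S (A τU) * (CS + CN) / CN := by
        have h2 : -(uN * D'N (A τU) + uS * D'S (A τU)) * (CS + CN) / (uN * CS + uS * CN) <
            -D'S (A τU) * (CS + CN) / CN := by
          rw [div_lt_div_iff₀ hden hCN]
          nlinarith [mul_pos hCNS (mul_pos huN
            (by linarith : (0:ℝ) < -D'S (A τU) * CS - CN * -D'N (A τU)))]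
        linarith [hU]
      exact cmp2 _ hPSanti τPS τU hPS.symm hlt
  · -- Negishi, S-damage side heavier
    intro hc
    have key := keypos _ hc
    constructor
    · have hlt : -D'N (A τNeg) * (CN + CS) / CS < τNeg := by
        have h2 : -D'N (A τNeg) * (CN + CS) / CS <
            -(D'N (A τNeg) + D'S (A τNeg)) := by
          rw [div_lt_iff₀ hCS]
          nlinarith [key]
        linarith [hNeg]
      exact cmp _ hPNanti τPN τNeg hPN.symm hlt
    · have hlt : τNeg < -D'S (A τNeg) * (CS + CN) / CN := by
        have h2 : -(D'N (A τNeg) + D'S (A τNeg)) <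
            -D'S (A τNeg) * (CS + CN) / CN := by
          rw [lt_div_iff₀ hCN]
          nlinarith [key]
        linarith [hNeg]
      exact cmp2 _ hPSanti τPS τNeg hPS.symm hlt
  · -- utilitarian, N-damage side heavier
    intro hc
    have key := keyneg _ hc
    constructor
    · have hlt : -D'S (A τU) * (CS + CN) / CN < τU := by
        have h2 : -D'S (A τU) * (CS + CN) / CN <
            -(uN * D'N (A τU) + uS * D'S (A τU)) * (CS + CN) / (uN * CS + uS * CN) := by
          rw [div_lt_div_iff₀ hCN hden]
          nlinarith [mul_pos hCNS (mul_pos huN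
            (by linarith : (0:ℝ) < CN * -D'N (A τU) - -D'S (A τU) * CS))]
        linarith [hU]
      exact cmp _ hPSanti τPS τU hPS.symm hlt
    · have hlt : τU < -D'N (A τU) * (CN + CS) / CS := by
        have h2 : -(uN * D'N (A τU) + uS * D'S (A τU)) * (CS + CN) / (uN * CS + uS * CN) <
            -D'N (A τU) * (CN + CS) / CS := by
          rw [div_lt_div_iff₀ hden hCS]
          nlinarith [mul_pos hCNS (mul_pos huS
            (by linarith : (0:ℝ) < CN * -D'N (A τU) - -D'S (A τU) * CS))]
        linarith [hU]
      exact cmp2 _ hPNanti τPN τU hPN.symm hlt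
  · -- Negishi, N-damage side heavier
    intro hc
    have key := keyneg _ hc
    constructor
    · have hlt : -D'S (A τNeg) * (CS + CN) / CN < τNeg := by
        have h2 : -D'S (A τNeg) * (CS + CN) / CN <
            -(D'N (A τNeg) + D'S (A τNeg)) := by
          rw [div_lt_iff₀ hCN]
          nlinarith [key]
        linarith [hNeg]
      exact cmp _ hPSanti τPS τNeg hPS.symm hlt
    · have hlt : τNeg < -D'N (A τNeg) * (CN + CS) / CS := by
        have h2 : -(D'N (A τNeg) + D'S (A τNeg)) <
            -D'N (A τNeg) * (CN + CS) / CS := by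
          rw [lt_div_iff₀ hCS]
          nlinarith [key]
        linarith [hNeg]
      exact cmp2 _ hPNanti τPN τNeg hPN.symm hlt
  · rintro ⟨h1, h2, h3⟩
    rcases lt_trichotomy (D'S (A τNeg) / D'N (A τNeg)) (CN / CS) with h|h|h
    · exfalso
      have key := keyneg _ h
      have hlt : -D'S (A τNeg) * (CS + CN) / CN < τNeg := by
        have hh : -D'S (A τNeg) * (CS + CN) / CN <
            -(D'N (A τNeg) + D'S (A τNeg)) := by
          rw [div_lt_iff₀ hCN]
          nlinarith [key]
        linarith [hNeg]
      have := cmp _ hPSanti τPS τNeg hPS.symm hlt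
      linarith
    · exact h
    · exfalso
      have key := keypos _ h
      have hlt : -D'N (A τNeg) * (CN + CS) / CS < τNeg := by
        have hh : -D'N (A τNeg) * (CN + CS) / CS <
            -(D'N (A τNeg) + D'S (A τNeg)) := by
          rw [div_lt_iff₀ hCS]
          nlinarith [key]
        linarith [hNeg]
      have := cmp _ hPNanti τPN τNeg hPN.symm hlt
      linarith
  · intro h
    have hn := hDNneg (A τNeg)
    have hkey : D'S (A τNeg) * CS = CN * D'N (A τNeg) :=
      (div_eq_div_iff (ne_of_lt hn) (ne_of_gt hCS)).mp h
    have e1 : -D'N (A τNeg) * (CN + CS) / CS = τNeg := by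
      have : -D'N (A τNeg) * (CN + CS) / CS =
          -(D'N (A τNeg) + D'S (A τNeg)) := by
        field_simp
        linarith [hkey]
      exact this.trans hNeg.symm
    have e2 : -D'S (A τNeg) * (CS + CN) / CN = τNeg := by
      have : -D'S (A τNeg) * (CS + CN) / CN =
          -(D'N (A τNeg) + D'S (A τNeg)) := by
        field_simp
        linarith [hkey]
      exact this.trans hNeg.symm
    have e3 : -(uN * D'N (A τNeg) + uS * D'S (A τNeg)) * (CS + CN) /
        (uN * CS + uS * CN) = τNeg := by
      have : -(uN * D'N (A τNeg) + uS * D'S (A τNeg)) * (CS + CN) /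
          (uN * CS + uS * CN) = -(D'N (A τNeg) + D'S (A τNeg)) := by
        field_simp
        linear_combination (uN - uS) * hkey
      exact this.trans hNeg.symm
    have q1 : τPN = τNeg := fixuniq _ hPNanti τPN τNeg hPN.symm e1
    have q2 : τPS = τNeg := fixuniq _ hPSanti τPS τNeg hPS.symm e2
    have q3 : τU = τNeg := fixuniq _ hUanti τU τNeg hU.symm e3
    exact ⟨q2.trans q3.symm, q3, q1.symm⟩
end

section
/- In the static two-region model, the utilitarian uniform carbon price is strictly greater than the Negishi-weighted carbon price if and only if the South's preferred uniform carbon price is strictly greater than the North's preferred uniform carbon price. -/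
set_option maxHeartbeats 1000000 in
/-- Proposition 3: the utilitarian uniform carbon price strictly exceeds the
Negishi-weighted carbon price iff the South's preferred uniform carbon price
strictly exceeds the North's preferred uniform carbon price. -/
theorem utilitarian_gt_negishi_iff_south_prefers_higher
    (CN CS mN mS : ℝ) (hCN : 0 < CN) (hCS : 0 < CS)
    (D'N D'S : ℝ → ℝ)
    (hDNmono : StrictMono D'N) (hDSmono : StrictMono D'S)
    (hDNneg : ∀ A, D'N A < 0) (hDSneg : ∀ A, D'S A < 0)
    (uN uS : ℝ) (huN : 0 < uN) (huNS : uN < uS)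
    (A : ℝ → ℝ) (hA : ∀ τ, A τ = (τ - mN) / CN + (τ - mS) / CS)
    (τNeg τU τPN τPS : ℝ)
    (hNeg : τNeg = -(D'N (A τNeg) + D'S (A τNeg)))
    (hU : τU = -(uN * D'N (A τU) + uS * D'S (A τU)) * (CS + CN) /
        (uN * CS + uS * CN))
    (hPN : τPN = -D'N (A τPN) * (CN + CS) / CS)
    (hPS : τPS = -D'S (A τPS) * (CS + CN) / CN) :
    τU > τNeg ↔ τPS > τPN := by
  have huS : 0 < uS := lt_trans huN huNS
  have hden : 0 < uN * CS + uS * CN := by positivity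
  have hAmono : StrictMono A := by
    intro x y hxy
    rw [hA x, hA y]
    gcongr <;> linarith
  -- the four "best-response" price functions
  set gN : ℝ → ℝ := fun τ => -D'N (A τ) * (CN + CS) / CS with hgNdef
  set gS : ℝ → ℝ := fun τ => -D'S (A τ) * (CS + CN) / CN with hgSdef
  set gNeg : ℝ → ℝ := fun τ => -(D'N (A τ) + D'S (A τ)) with hgNegdef
  set gU : ℝ → ℝ := fun τ => -(uN * D'N (A τ) + uS * D'S (A τ)) * (CS + CN) /
      (uN * CS + uS * CN) with hgUdef
  have hfixN : gN τPN = τPN := hPN.symm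
  have hfixS : gS τPS = τPS := hPS.symm
  have hfixNeg : gNeg τNeg = τNeg := hNeg.symm
  have hfixU : gU τU = τU := hU.symm
  have hgN : StrictAnti gN := by
    intro x y hxy
    have h1 : D'N (A x) < D'N (A y) := hDNmono (hAmono hxy)
    have h2 : -D'N (A y) < -D'N (A x) := by linarith
    simp only [hgNdef]
    gcongr <;> linarith
  have hgS : StrictAnti gS := by
    intro x y hxy
    have h1 : D'S (A x) < D'S (A y) := hDSmono (hAmono hxy)
    simp only [hgSdef]
    gcongr <;> linarith
  have hgNeg : StrictAnti gNeg := by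
    intro x y hxy
    have h1 : D'N (A x) < D'N (A y) := hDNmono (hAmono hxy)
    have h2 : D'S (A x) < D'S (A y) := hDSmono (hAmono hxy)
    simp only [hgNegdef]
    linarith
  have hgU : StrictAnti gU := by
    intro x y hxy
    have h1 : D'N (A x) < D'N (A y) := hDNmono (hAmono hxy)
    have h2 : D'S (A x) < D'S (A y) := hDSmono (hAmono hxy)
    simp only [hgUdef]
    have hnum : -(uN * D'N (A y) + uS * D'S (A y)) <
        -(uN * D'N (A x) + uS * D'S (A x)) := by
      nlinarith [mul_lt_mul_of_pos_left h1 huN, mul_lt_mul_of_pos_left h2 huS]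
    have h3 : -(uN * D'N (A y) + uS * D'S (A y)) * (CS + CN) <
        -(uN * D'N (A x) + uS * D'S (A x)) * (CS + CN) :=
      mul_lt_mul_of_pos_right hnum (by linarith)
    exact div_lt_div_of_pos_right h3 hden
  -- fixed-point comparison lemmas
  have key : ∀ (g : ℝ → ℝ), StrictAnti g → ∀ t, g t = t → ∀ s,
      (s < g s ↔ s < t) := by
    intro g hg t ht s
    constructor
    · intro h
      rcases lt_trichotomy s t with h1 | h1 | h1
      · exact h1
      · rw [h1, ht] at h; exact absurd h (lt_irrefl t)
      · have := hg h1; rw [ht] at this; linarith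
    · intro h
      have := hg h; rw [ht] at this; linarith
  have key2 : ∀ (g : ℝ → ℝ), StrictAnti g → ∀ t, g t = t → ∀ s,
      (g s < s ↔ t < s) := by
    intro g hg t ht s
    constructor
    · intro h
      rcases lt_trichotomy t s with h1 | h1 | h1
      · exact h1
      · rw [← h1, ht] at h; exact absurd h (lt_irrefl t)
      · have := hg h1; rw [ht] at this; linarith
    · intro h
      have := hg h; rw [ht] at this; linarith
  -- algebraic identities
  have id1 : ∀ τ, gNeg τ * (CN + CS) = CS * gN τ + CN * gS τ := by
    intro τ
    simp only [hgNdef, hgSdef, hgNegdef]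
    field_simp
    ring
  have id2 : ∀ τ, (gU τ - gNeg τ) * ((uN * CS + uS * CN) * (CN + CS)) =
      CN * CS * (uS - uN) * (gS τ - gN τ) := by
    intro τ
    simp only [hgNdef, hgSdef, hgNegdef, hgUdef]
    field_simp
    ring
  clear_value gN gS gNeg gU
  clear hgNdef hgSdef hgNegdef hgUdef
  constructor
  · -- τU > τNeg → τPS > τPN ; by contraposition
    intro h
    by_contra hc
    push_neg at hc  -- τPS ≤ τPN
    have h1 : gS τPN ≤ τPN := by
      have := hgS.antitone hc
      rw [hfixS] at this
      linarith
    have h2 : gNeg τPN ≤ τPN := by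
      nlinarith [id1 τPN]
    have h3 : τNeg ≤ τPN := by
      have := (key gNeg hgNeg τNeg hfixNeg τPN).not
      simp only [not_lt] at this
      exact this.mp h2
    have h4 : τPN ≤ gN τPS := by
      have := hgN.antitone hc
      rw [hfixN] at this
      linarith
    have h5 : τPS ≤ gNeg τPS := by
      nlinarith [id1 τPS]
    have h6 : τPS ≤ τNeg := by
      have := (key2 gNeg hgNeg τNeg hfixNeg τPS).not
      simp only [not_lt] at this
      exact this.mp h5
    have h7 : gS τNeg ≤ τNeg := by
      have := hgS.antitone h6
      rw [hfixS] at this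
      linarith
    have h8 : τNeg ≤ gN τNeg := by
      have := hgN.antitone h3
      rw [hfixN] at this
      linarith
    have h9 : gU τNeg ≤ τNeg := by
      have hq : 0 ≤ CN * CS * (uS - uN) :=
        mul_nonneg (mul_pos hCN hCS).le (by linarith)
      have h10 : CN * CS * (uS - uN) * (gS τNeg - gN τNeg) ≤ 0 :=
        mul_nonpos_of_nonneg_of_nonpos hq (by linarith)
      have hp : 0 < (uN * CS + uS * CN) * (CN + CS) := by positivity
      have hx := id2 τNeg
      rw [hfixNeg] at hx
      by_contra hcon
      push_neg at hcon
      have hmul : 0 < (gU τNeg - τNeg) * ((uN * CS + uS * CN) * (CN + CS)) :=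
        mul_pos (by linarith) hp
      linarith [hx, h10, hmul]
    have h11 : τU ≤ τNeg := by
      have := (key gU hgU τU hfixU τNeg).not
      simp only [not_lt] at this
      exact this.mp h9
    linarith
  · -- τPS > τPN → τU > τNeg
    intro hlt
    have h1 : τPN < gS τPN := by
      have := hgS hlt
      rw [hfixS] at this
      linarith
    have h2 : τPN < gNeg τPN := by
      nlinarith [id1 τPN]
    have h3 : τPN < τNeg := (key gNeg hgNeg τNeg hfixNeg τPN).mp h2
    have h4 : gN τPS < τPN := by
      have := hgN hlt
      rw [hfixN] at this
      linarith
    have h5 : gNeg τPS < τPS := by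
      nlinarith [id1 τPS]
    have h6 : τNeg < τPS := (key2 gNeg hgNeg τNeg hfixNeg τPS).mp h5
    have h7 : τNeg < gS τNeg := by
      have := hgS h6
      rw [hfixS] at this
      linarith
    have h8 : gN τNeg < τNeg := by
      have := hgN h3
      rw [hfixN] at this
      linarith
    have h9 : τNeg < gU τNeg := by
      have hq : 0 < CN * CS * (uS - uN) :=
        mul_pos (mul_pos hCN hCS) (by linarith)
      have h10 : 0 < CN * CS * (uS - uN) * (gS τNeg - gN τNeg) :=
        mul_pos hq (by linarith)
      have hp : 0 < (uN * CS + uS * CN) * (CN + CS) := by positivity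
      have hx := id2 τNeg
      rw [hfixNeg] at hx
      by_contra hcon
      push_neg at hcon
      have hmul : (gU τNeg - τNeg) * ((uN * CS + uS * CN) * (CN + CS)) ≤ 0 :=
        mul_nonpos_of_nonpos_of_nonneg (by linarith) hp.le
      linarith [hx, h10, hmul]
    exact (key gU hgU τU hfixU τNeg).mp h9
end

section
/- In the two-period model, the Negishi-weighted uniform carbon price τ̃ satisfies C'_{i1}(Ã_i) = -vβ(D'_{N2}(Ã) + D'_{S2}(Ã)), and the utilitarian uniform carbon price τ̌ satisfies C'_{i1}(Ǎ_i) = -β(u'_{N2}D'_{N2}(Ǎ) + u'_{S2}D'_{S2}(Ǎ)) · (C''_{S1} + C''_{N1})/(u'_{N1}C''_{S1} + u'_{S1}C''_{N1}). Then τ̌ > τ̃ if and only if (u'_{N2}D'_{N2} + u'_{S2}D'_{S2})/(D'_{N2} + D'_{S2}) > v · (u'_{N1}C''_{S1} + u'_{S1}C''_{N1})/(C''_{S1} + C''_{N1}), where all marginal utilities and marginal damages on both sides are evaluated at the utilitarian solution. -/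
/-- Proposition 4 (two-period model): the dynamic utilitarian uniform carbon
price exceeds the dynamic Negishi-weighted carbon price iff
`(u'_{N2}D'_{N2} + u'_{S2}D'_{S2})/(D'_{N2} + D'_{S2})
  > v (u'_{N1}C''_{S1} + u'_{S1}C''_{N1})/(C''_{S1} + C''_{N1})`,
with marginal utilities and marginal damages evaluated at the utilitarian
solution. -/
theorem dynamic_utilitarian_gt_negishi_iff
    (CN1 CS1 mN mS : ℝ) (hCN1 : 0 < CN1) (hCS1 : 0 < CS1)
    (β v : ℝ) (hβ : 0 < β) (hβ1 : β ≤ 1) (hv : 0 < v)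
    -- second-period marginal damage functions of aggregate first-period abatement
    (D'N2 D'S2 : ℝ → ℝ)
    (hDNmono : StrictMono D'N2) (hDSmono : StrictMono D'S2)
    (hDNneg : ∀ A, D'N2 A < 0) (hDSneg : ∀ A, D'S2 A < 0)
    -- marginal utilities at the utilitarian solution (all positive)
    (uN1 uS1 uN2 uS2 : ℝ)
    (huN1 : 0 < uN1) (huS1 : 0 < uS1) (huN2 : 0 < uN2) (huS2 : 0 < uS2)
    -- aggregate first-period abatement under a uniform carbon price
    (A : ℝ → ℝ) (hA : ∀ τ, A τ = (τ - mN) / CN1 + (τ - mS) / CS1)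
    (τNeg τU : ℝ)
    (hNeg : τNeg = -(v * β * (D'N2 (A τNeg) + D'S2 (A τNeg))))
    (hU : τU = -(β * (uN2 * D'N2 (A τU) + uS2 * D'S2 (A τU))) *
        (CS1 + CN1) / (uN1 * CS1 + uS1 * CN1)) :
    τU > τNeg ↔
      (uN2 * D'N2 (A τU) + uS2 * D'S2 (A τU)) /
          (D'N2 (A τU) + D'S2 (A τU)) >
        v * (uN1 * CS1 + uS1 * CN1) / (CS1 + CN1) := by

  -- abbreviations
  set s := D'N2 (A τU) + D'S2 (A τU) with hs_def
  set u := uN2 * D'N2 (A τU) + uS2 * D'S2 (A τU) with hu_def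
  have hK : 0 < uN1 * CS1 + uS1 * CN1 := by positivity
  have hL : 0 < CS1 + CN1 := by positivity
  have hs : s < 0 := by
    have := hDNneg (A τU); have := hDSneg (A τU); simp only [hs_def]; linarith
  -- A is strictly monotone
  have hAmono : StrictMono A := by
    intro a b hab
    rw [hA a, hA b]
    have h1 : (a - mN) / CN1 < (b - mN) / CN1 :=
      div_lt_div_of_pos_right (by linarith) hCN1
    have h2 : (a - mS) / CS1 < (b - mS) / CS1 :=
      div_lt_div_of_pos_right (by linarith) hCS1
    linarith
  -- the Negishi best-response map is strictly antitone
  have hg : StrictAnti (fun τ => -(v * β * (D'N2 (A τ) + D'S2 (A τ)))) := by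
    intro a b hab
    have hA' := hAmono hab
    have h1 := hDNmono hA'
    have h2 := hDSmono hA'
    have hvβ : 0 < v * β := mul_pos hv hβ
    simp only
    nlinarith
  -- fixed point comparison: τU > τNeg ↔ τU > g τU
  have key : τU > τNeg ↔ τU > -(v * β * s) := by
    constructor
    · intro h
      have := hg h  -- g τU < g τNeg
      simp only at this
      rw [← hNeg] at this
      simp only [hs_def]
      linarith
    · intro h
      by_contra hc
      push_neg at hc
      rcases eq_or_lt_of_le hc with heq | hlt
      · rw [heq] at h; rw [hNeg] at h; simp only [hs_def, heq] at h; linarith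
      · have := hg hlt
        simp only at this
        rw [← hNeg] at this
        simp only [hs_def] at h
        linarith
  rw [key]
  -- algebra
  constructor
  · intro h
    rw [hU] at h
    rw [gt_iff_lt, lt_div_iff_of_neg hs, div_mul_eq_mul_div, lt_div_iff₀ hL]
    rw [gt_iff_lt, lt_div_iff₀ hK] at h
    have hβ' : u * (CS1 + CN1) * β < v * (uN1 * CS1 + uS1 * CN1) * s * β := by
      nlinarith
    have := lt_of_mul_lt_mul_right hβ' (le_of_lt hβ)
    nlinarith
  · intro h
    rw [gt_iff_lt, lt_div_iff_of_neg hs, div_mul_eq_mul_div, lt_div_iff₀ hL] at h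
    rw [hU, gt_iff_lt, lt_div_iff₀ hK]
    nlinarith
end

section
/- Forward implication of Proposition 4: if in the two-period model the Negishi uniform carbon price is strictly less than the utilitarian uniform carbon price (τ̃ < τ̌), then, evaluating marginal quantities at the utilitarian solution, (u'_{N2}D'_{N2} + u'_{S2}D'_{S2})/(D'_{N2} + D'_{S2}) > v(u'_{N1}C''_{S1} + u'_{S1}C''_{N1})/(C''_{S1} + C''_{N1}). The key monotone implications used are: τ̃ < τ̌ implies Ã_{i1} < Ǎ_{i1} for all i (by strict convexity of C_{i1}), hence Ã < Ǎ and D̃'_{i2} < Ď'_{i2} for all i (by strict convexity of D_{i2} and negativity of marginal damages). -/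
/-- Forward implication of Proposition 4: if the dynamic Negishi uniform
carbon price is strictly below the dynamic utilitarian uniform carbon price,
then `(u'_{N2}D'_{N2} + u'_{S2}D'_{S2})/(D'_{N2} + D'_{S2})
  > v (u'_{N1}C''_{S1} + u'_{S1}C''_{N1})/(C''_{S1} + C''_{N1})`,
evaluated at the utilitarian solution. -/
theorem dynamic_utilitarian_gt_negishi_forward
    (CN1 CS1 mN mS : ℝ) (hCN1 : 0 < CN1) (hCS1 : 0 < CS1)
    (β v : ℝ) (hβ : 0 < β) (hv : 0 < v)
    (D'N2 D'S2 : ℝ → ℝ)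
    (hDNmono : StrictMono D'N2) (hDSmono : StrictMono D'S2)
    (hDNneg : ∀ A, D'N2 A < 0) (hDSneg : ∀ A, D'S2 A < 0)
    (uN1 uS1 uN2 uS2 : ℝ)
    (huN1 : 0 < uN1) (huS1 : 0 < uS1) (huN2 : 0 < uN2) (huS2 : 0 < uS2)
    (A : ℝ → ℝ) (hA : ∀ τ, A τ = (τ - mN) / CN1 + (τ - mS) / CS1)
    (τNeg τU : ℝ)
    (hNeg : τNeg = -(v * β * (D'N2 (A τNeg) + D'S2 (A τNeg))))
    (hU : τU = -(β * (uN2 * D'N2 (A τU) + uS2 * D'S2 (A τU))) *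
        (CS1 + CN1) / (uN1 * CS1 + uS1 * CN1))
    (hlt : τNeg < τU) :
    (uN2 * D'N2 (A τU) + uS2 * D'S2 (A τU)) /
        (D'N2 (A τU) + D'S2 (A τU)) >
      v * (uN1 * CS1 + uS1 * CN1) / (CS1 + CN1) := by
  have hc : (0:ℝ) < CS1 + CN1 := by linarith
  have hden : (0:ℝ) < uN1 * CS1 + uS1 * CN1 := by positivity
  have hAm : A τNeg < A τU := by
    rw [hA, hA]; gcongr
  have h1 := hDNmono hAm
  have h2 := hDSmono hAm
  set a := D'N2 (A τU) with ha'
  set b := D'S2 (A τU) with hb'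
  have ha : a < 0 := hDNneg _
  have hb : b < 0 := hDSneg _
  have hab : a + b < 0 := by linarith
  have hlt' : -(v * β * (D'N2 (A τNeg) + D'S2 (A τNeg))) <
      -(β * (uN2 * a + uS2 * b)) * (CS1 + CN1) / (uN1 * CS1 + uS1 * CN1) := by
    rw [← hNeg, ← hU]; exact hlt
  rw [lt_div_iff₀ hden] at hlt'
  have key0 : (uN2 * a + uS2 * b) * (CS1 + CN1) <
      v * (uN1 * CS1 + uS1 * CN1) * (D'N2 (A τNeg) + D'S2 (A τNeg)) :=
    lt_of_mul_lt_mul_left (by nlinarith [hlt']) hβ.le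
  have hsum : D'N2 (A τNeg) + D'S2 (A τNeg) < a + b := by linarith
  have key : (uN2 * a + uS2 * b) * (CS1 + CN1) <
      v * (uN1 * CS1 + uS1 * CN1) * (a + b) :=
    key0.trans (mul_lt_mul_of_pos_left hsum (mul_pos hv hden))
  rw [gt_iff_lt, lt_div_iff_of_neg hab, div_mul_eq_mul_div, lt_div_iff₀ hc]
  nlinarith [key]
end

section
/- In the static two-region model, the utilitarian differentiated carbon prices τ_i = -(1/u'_i)(u'_N D'_N + u'_S D'_S) equalize the marginal welfare cost of abatement across regions: u'_N C'_N(A_N) = u'_S C'_S(A_S) = -(u'_N D'_N + u'_S D'_S). Consequently, since u'_S > u'_N > 0, the richer region's carbon price is strictly higher: τ_N > τ_S. -/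
/-! Write `M = -(u'_N D'_N + u'_S D'_S)` for the marginal welfare benefit of abatement, which is
positive because damages fall with abatement. Each price is `τ_i = M / u'_i`, so `u'_i τ_i = M`,
and a larger marginal utility gives a smaller price. -/

/-- The utilitarian differentiated carbon prices
`τ_i = -(1/u'_i)(u'_N D'_N + u'_S D'_S)` equalize marginal welfare costs of
abatement across regions, each equal to the sum of marginal welfare benefits;
consequently, since `u'_S > u'_N > 0`, the richer region's carbon price is
strictly higher: `τ_N > τ_S`. -/
theorem utilitarian_differentiated_prices
    (uN uS D'N D'S τN τS : ℝ)
    (huN : 0 < uN) (huNS : uN < uS)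
    (hDN : D'N < 0) (hDS : D'S < 0)
    (hτN : τN = -(1 / uN) * (uN * D'N + uS * D'S))
    (hτS : τS = -(1 / uS) * (uN * D'N + uS * D'S)) :
    uN * τN = -(uN * D'N + uS * D'S) ∧
      uS * τS = -(uN * D'N + uS * D'S) ∧
      τS < τN := by
  have huS : 0 < uS := huN.trans huNS
  have hbenefit : 0 < -(uN * D'N + uS * D'S) :=
    neg_pos.mpr (add_neg (mul_neg_of_pos_of_neg huN hDN) (mul_neg_of_pos_of_neg huS hDS))
  rw [neg_mul, one_div_mul_eq_div, ← neg_div] at hτN hτS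
  subst hτN hτS
  exact ⟨mul_div_cancel₀ _ huN.ne', mul_div_cancel₀ _ huS.ne',
    div_lt_div_of_pos_left hbenefit huN huNS⟩
end

section
/- With isoelastic utility u(x) = x^{1-η}/(1-η) for η > 0, η ≠ 1 (and u(x) = log x for η = 1), the approximate utilitarian-Negishi uniform carbon price ratio R(r_L, r_w, r_d, r_c, η) = [ (r_L r_w^{1-η} r_d + 1)/(r_L r_w r_d + 1) ] · [ (r_L r_w r_c + 1)/(r_L r_w^{1-η} r_c + 1) ], where r_L = L_S/L_N, r_w = w_S/w_N, r_d = d'_S/d'_N, r_c = c''_N/c''_S are all positive, satisfies: (i) R = 1 whenever r_w = 1 or η = 0; (ii) R = 1 whenever r_d = r_c; (iii) if r_w < 1 and η > 0, then R > 1 if and only if r_d > r_c. -/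
/-- The approximate utilitarian–Negishi uniform carbon price ratio with
isoelastic utility (Equation 14 of the paper). -/
noncomputable def priceRatio (rL rw rd rc η : ℝ) : ℝ :=
  ((rL * rw ^ (1 - η) * rd + 1) / (rL * rw * rd + 1)) *
    ((rL * rw * rc + 1) / (rL * rw ^ (1 - η) * rc + 1))

/-- Properties of the approximate utilitarian–Negishi uniform carbon price
ratio: it equals 1 when there is no inequality (`r_w = 1`) or utility is
linear (`η = 0`); it equals 1 when `r_d = r_c`; and with the South poorer
(`r_w < 1`) and `η > 0`, the ratio exceeds 1 iff `r_d > r_c`. -/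
theorem priceRatio_properties
    (rL rw rd rc η : ℝ)
    (hrL : 0 < rL) (hrw : 0 < rw) (hrd : 0 < rd) (hrc : 0 < rc) (hη : 0 ≤ η) :
    ((rw = 1 ∨ η = 0) → priceRatio rL rw rd rc η = 1) ∧
    (rd = rc → priceRatio rL rw rd rc η = 1) ∧
    (rw < 1 → 0 < η → (priceRatio rL rw rd rc η > 1 ↔ rd > rc)) := by
  have hpow : 0 < rw ^ (1 - η) := Real.rpow_pos_of_pos hrw _
  have hA : 0 < rL * rw ^ (1 - η) * rd + 1 := by positivity
  have hB : 0 < rL * rw * rd + 1 := by positivity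
  have hC : 0 < rL * rw * rc + 1 := by positivity
  have hD : 0 < rL * rw ^ (1 - η) * rc + 1 := by positivity
  refine ⟨?_, ?_, ?_⟩
  · rintro (h | h)
    · subst h
      simp only [priceRatio, Real.one_rpow]
      field_simp
    · subst h
      simp only [priceRatio, sub_zero, Real.rpow_one]
      field_simp
  · rintro rfl
    simp only [priceRatio]
    field_simp
  · intro hrw1 hη0
    have hab : rw < rw ^ (1 - η) := by
      calc rw = rw ^ (1 : ℝ) := (Real.rpow_one rw).symm
        _ < rw ^ (1 - η) := Real.rpow_lt_rpow_of_exponent_gt hrw hrw1 (by linarith)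
    unfold priceRatio
    rw [div_mul_div_comm, gt_iff_lt, lt_div_iff₀ (by positivity), one_mul]
    constructor
    · intro h
      nlinarith [mul_pos hrL (sub_pos.mpr hab)]
    · intro h
      nlinarith [mul_pos (mul_pos hrL (sub_pos.mpr hab)) (sub_pos.mpr h)]
end

section
/- In the dynamic carbon price ratio approximation, multiplying the population of the South in both periods by a common growth factor affects the ratio only through the products r_L g, and increasing the South's relative population growth factor g = g^L_S/g^L_N strictly increases the utilitarian-Negishi carbon price ratio whenever the South is poorer (r_w < 1, η > 0) and r_d ≥ 1; in particular, the ratio strictly exceeds 1 for g large enough even when marginal damages per endowment are equal across regions (r_d = 1), provided r_w < 1 and η > 0. -/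
/-- The damage factor of the dynamic utilitarian–Negishi carbon price ratio,
as a function of the South's relative population level `a = L_{S1}/L_{N1}` and
relative population growth factor `g`. -/
noncomputable def damageFactor (rw η rd a g : ℝ) : ℝ :=
  (a * g * rw ^ (1 - η) * rd + 1) / (a * g * rw * rd + 1)

/-- In the dynamic carbon price ratio approximation: the South's population
enters only through the product `r_L · g`; the ratio is strictly increasing in
the South's relative population growth factor `g` whenever the South is poorer
(`r_w < 1`, `η > 0`) and `r_d ≥ 1`; and for `r_d = 1` the factor strictly
exceeds 1 for `g` large enough. -/
theorem damageFactor_population_growth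
    (a rw rd η : ℝ)
    (ha : 0 < a) (hrw0 : 0 < rw) (hrw : rw < 1) (hη : 0 < η) (hrd : 1 ≤ rd) :
    -- the ratio depends on population only through the product r_L · g
    (∀ a₁ a₂ g₁ g₂ : ℝ, a₁ * g₁ = a₂ * g₂ →
      damageFactor rw η rd a₁ g₁ = damageFactor rw η rd a₂ g₂) ∧
    -- strictly increasing in the relative population growth factor
    (∀ g₁ g₂ : ℝ, 0 < g₁ → g₁ < g₂ →
      damageFactor rw η rd a g₁ < damageFactor rw η rd a g₂) ∧
    -- exceeds 1 for g large enough, even with equal marginal damages per endowment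
    (rd = 1 → ∃ G : ℝ, ∀ g > G, 1 < damageFactor rw η rd a g) := by
  have hB : rw < rw ^ (1 - η) := by
    calc rw = rw ^ (1 : ℝ) := (Real.rpow_one rw).symm
    _ < rw ^ (1 - η) := Real.rpow_lt_rpow_of_exponent_gt hrw0 hrw (by linarith)
  have hrd0 : (0 : ℝ) < rd := by linarith
  have hBC : rw * rd < rw ^ (1 - η) * rd := by
    exact mul_lt_mul_of_pos_right hB hrd0
  refine ⟨?_, ?_, ?_⟩
  · intro a₁ a₂ g₁ g₂ h
    unfold damageFactor
    rw [show a₁ * g₁ * rw ^ (1 - η) = a₁ * g₁ * rw ^ (1 - η) from rfl]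
    rw [show a₁ * g₁ = a₂ * g₂ from h]
  · intro g₁ g₂ hg1 hg12
    unfold damageFactor
    have hd1 : 0 < a * g₁ * rw * rd + 1 := by positivity
    have hg2 : 0 < g₂ := hg1.trans hg12
    have hd2 : 0 < a * g₂ * rw * rd + 1 := by positivity
    rw [div_lt_div_iff₀ hd1 hd2]
    nlinarith [mul_pos ha hg1, mul_lt_mul_of_pos_left hg12 ha,
      mul_pos (mul_pos ha hg1) (sub_pos.mpr hBC)]
  · intro hrd1
    refine ⟨0, fun g hg => ?_⟩
    unfold damageFactor
    have hg0 : 0 < g := hg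
    have hd : 0 < a * g * rw * rd + 1 := by positivity
    rw [one_lt_div hd]
    nlinarith [mul_pos (mul_pos ha hg) (sub_pos.mpr hBC)]
end
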